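/- arXiv:1208.1430 — 2 statements merged into one kernel-verified Lean document; each statement's English description precedes it below -/
import Mathlib

section
/- Let u ∈ ℤ² ∖ {0}, let s ≥ 0 be a real number, and let ε ∈ {−1, 1}. Then the set {v ∈ ℤ² : ‖u‖ < ‖v‖, 0 ≤ ⟨u,v⟩ < s, det(u,v) = ε} is finite and has cardinality at most s/‖u‖². -/
open scoped RealInnerProductSpace
open MeasureTheory Real

noncomputable section

abbrev E2 : Type := EuclideanSpace ℝ (Fin 2)

def mk2 (a b : ℝ) : E2 := !₂[a, b]

def IsAsymNorm (F : E2 → ℝ) : Prop :=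
  ConvexOn ℝ Set.univ F ∧
  (∀ (c : ℝ), 0 ≤ c → ∀ u : E2, F (c • u) = c * F u) ∧
  (∀ u : E2, 0 ≤ F u) ∧
  (∀ u : E2, u ≠ 0 → 0 < F u)

def IsAcute (F : E2 → ℝ) (u v : E2) : Prop :=
  ∀ δ : ℝ, 0 ≤ δ → F u ≤ F (u + δ • v) ∧ F v ≤ F (v + δ • u)

noncomputable def kappa (F : E2 → ℝ) : ℝ :=
  sSup {r : ℝ | ∃ u v : E2, ‖u‖ = 1 ∧ ‖v‖ = 1 ∧ r = F u / F v}

def det2 (u v : E2) : ℝ := u 0 * v 1 - u 1 * v 0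

def IsIntVec (u : E2) : Prop := (∃ n : ℤ, u 0 = (n : ℝ)) ∧ (∃ n : ℤ, u 1 = (n : ℝ))

def eTheta (θ : ℝ) : E2 := mk2 (Real.cos θ) (Real.sin θ)

noncomputable def phiF (F : E2 → ℝ) (θ : ℝ) : ℝ :=
  Real.arctan (det2 (eTheta θ) (gradient F (eTheta θ)) / F (eTheta θ))

def rot2 (θ : ℝ) (w : E2) : E2 :=
  mk2 (Real.cos θ * w 0 - Real.sin θ * w 1) (Real.sin θ * w 0 + Real.cos θ * w 1)

def perp (z : E2) : E2 := mk2 (-(z 1)) (z 0)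

/-!
For `u ≠ 0` a vector is determined by its inner product and determinant against `u`, because
`‖u‖² v = ⟪u, v⟫ u + det(u, v) u^⊥`; so `v ↦ ⟪u, v⟫` is injective on the set. For integer
vectors with `det(u, v) = ±1`, Lagrange's identity `⟪u, v⟫² + det(u, v)² = ‖u‖² ‖v‖²` together
with `‖u‖ < ‖v‖` forces `⟪u, v⟫ ≥ ‖u‖²`, and unimodularity makes all these inner products
congruent modulo `‖u‖²`. They therefore lie in `[‖u‖², s)` with pairwise distances in `‖u‖² ℤ`,
which leaves room for at most `s / ‖u‖²` of them.
-/

lemma dvd_of_dvd_mul_of_dvd_mul_of_isUnit {R : Type*} [CommRing R] {m a b d x y : R}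
    (ha : m ∣ a * d) (hb : m ∣ b * d) (hunit : IsUnit (a * y - b * x)) : m ∣ d := by
  refine (hunit.dvd_mul_right).mp ?_
  have h : d * (a * y - b * x) = a * d * y - b * d * x := by ring
  rw [h]
  exact dvd_sub (ha.mul_right y) (hb.mul_right x)

lemma sq_add_sq_dvd_sub_of_det_eq {R : Type*} [CommRing R] {a b x y x' y' : R}
    (hunit : IsUnit (a * y - b * x)) (hdet : a * y - b * x = a * y' - b * x') :
    a ^ 2 + b ^ 2 ∣ (a * x + b * y) - (a * x' + b * y') := by
  apply dvd_of_dvd_mul_of_dvd_mul_of_isUnit _ _ hunit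
  · exact ⟨x - x', by linear_combination b * hdet⟩
  · exact ⟨y - y', by linear_combination -a * hdet⟩

lemma eq_of_floor_eq_of_sub_eq_intCast {t t' : ℝ} {k : ℤ} (hk : t - t' = k) (h : ⌊t⌋ = ⌊t'⌋) :
    t = t' := by
  rw [show t' = t - k by linarith, Int.floor_sub_intCast] at h
  have hk0 : k = 0 := by omega
  linarith [show (k : ℝ) = 0 by exact_mod_cast hk0]

lemma finite_and_ncard_le_div_of_sub_eq_intCast_mul {T : Set ℝ} {m s : ℝ} (hm : 0 < m)
    (hs : 0 ≤ s) (hT : T ⊆ Set.Ico m s) (hdiff : ∀ t ∈ T, ∀ t' ∈ T, ∃ k : ℤ, t - t' = k * m) :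
    T.Finite ∧ (T.ncard : ℝ) ≤ s / m := by
  set I : Finset ℤ := Finset.Icc 1 ⌊s / m⌋
  have hmaps : Set.MapsTo (fun t => ⌊t / m⌋) T I := by
    intro t ht
    obtain ⟨hmt, hts⟩ := hT ht
    simp only [I, Finset.coe_Icc, Set.mem_Icc, Int.le_floor, Int.cast_one]
    exact ⟨(one_le_div hm).mpr hmt,
      (Int.floor_le _).trans (div_le_div_of_nonneg_right hts.le hm.le)⟩
  have hinj : Set.InjOn (fun t => ⌊t / m⌋) T := by
    intro t ht t' ht' h
    obtain ⟨k, hk⟩ := hdiff t ht t' ht'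
    have hk' : t / m - t' / m = k := by rw [← sub_div, hk, mul_div_cancel_right₀ _ hm.ne']
    exact (div_left_inj' hm.ne').mp (eq_of_floor_eq_of_sub_eq_intCast hk' h)
  refine ⟨Set.Finite.of_injOn hmaps hinj I.finite_toSet, ?_⟩
  calc (T.ncard : ℝ) ≤ I.card := by
        exact_mod_cast Set.ncard_coe_finset I ▸ Set.ncard_le_ncard_of_injOn _ hmaps hinj
    _ = ⌊s / m⌋₊ := by rw [Int.card_Icc, add_sub_cancel_right, Int.floor_toNat]
    _ ≤ s / m := Nat.floor_le (div_nonneg hs hm.le)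

lemma E2.inner_eq (v w : E2) : ⟪v, w⟫ = v 0 * w 0 + v 1 * w 1 := by
  simp [PiLp.inner_apply, Fin.sum_univ_two, mul_comm]

lemma E2.norm_sq_eq (v : E2) : ‖v‖ ^ 2 = v 0 ^ 2 + v 1 ^ 2 := by
  rw [← real_inner_self_eq_norm_sq, E2.inner_eq]; ring

lemma inner_sq_add_det2_sq (u v : E2) : ⟪u, v⟫ ^ 2 + det2 u v ^ 2 = ‖u‖ ^ 2 * ‖v‖ ^ 2 := by
  rw [E2.inner_eq, E2.norm_sq_eq, E2.norm_sq_eq, det2]; ring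

lemma norm_sq_smul_eq_inner_smul_add_det2_smul_perp (u v : E2) :
    ‖u‖ ^ 2 • v = ⟪u, v⟫ • u + det2 u v • perp u := by
  ext i
  fin_cases i <;> simp [E2.inner_eq, E2.norm_sq_eq, det2, perp, mk2] <;> ring

lemma injOn_inner_of_det2_eq {u : E2} (hu : u ≠ 0) (c : ℝ) :
    Set.InjOn (fun v => ⟪u, v⟫) {v | det2 u v = c} := by
  intro v (hv : det2 u v = c) w (hw : det2 u w = c) (h : ⟪u, v⟫ = ⟪u, w⟫)
  have hsmul : ‖u‖ ^ 2 • v = ‖u‖ ^ 2 • w := by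
    rw [norm_sq_smul_eq_inner_smul_add_det2_smul_perp,
      norm_sq_smul_eq_inner_smul_add_det2_smul_perp, h, hv, hw]
  exact smul_right_injective E2 (by positivity) hsmul

namespace IsIntVec

variable {u v w : E2}

lemma exists_inner_eq_intCast (hu : IsIntVec u) (hv : IsIntVec v) : ∃ n : ℤ, ⟪u, v⟫ = n := by
  obtain ⟨⟨a, ha⟩, ⟨b, hb⟩⟩ := hu
  obtain ⟨⟨x, hx⟩, ⟨y, hy⟩⟩ := hv
  exact ⟨a * x + b * y, by rw [E2.inner_eq, ha, hb, hx, hy]; push_cast; ring⟩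

lemma norm_sq_le_inner (hu : IsIntVec u) (hv : IsIntVec v) (hdet : det2 u v = -1 ∨ det2 u v = 1)
    (hnorm : ‖u‖ < ‖v‖) (hinner : 0 ≤ ⟪u, v⟫) : ‖u‖ ^ 2 ≤ ⟪u, v⟫ := by
  obtain ⟨n, hn⟩ := hu.exists_inner_eq_intCast hv
  obtain ⟨m, hm⟩ := hu.exists_inner_eq_intCast hu
  rw [real_inner_self_eq_norm_sq] at hm
  have hlagrange : (n : ℝ) ^ 2 + 1 = m * ‖v‖ ^ 2 := by
    rw [← hn, ← hm, ← inner_sq_add_det2_sq]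
    rcases hdet with h | h <;> simp [h]
  have hm_lt : (m : ℝ) < ‖v‖ ^ 2 := hm ▸ pow_lt_pow_left₀ hnorm (norm_nonneg u) two_ne_zero
  have hm0 : (0 : ℝ) ≤ m := by rw [← hm]; positivity
  rw [hn] at hinner
  rw [hm, hn]
  rcases hm0.eq_or_lt with hm0 | hm0
  · rwa [← hm0]
  · have hsq : m ^ 2 < n ^ 2 + 1 := by exact_mod_cast (show (m : ℝ) ^ 2 < n ^ 2 + 1 by nlinarith)
    have hn0 : 0 ≤ n := by exact_mod_cast hinner
    exact_mod_cast (show m ≤ n by nlinarith)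

lemma exists_inner_sub_inner_eq_intCast_mul (hu : IsIntVec u) (hv : IsIntVec v) (hw : IsIntVec w)
    (hdet : det2 u v = -1 ∨ det2 u v = 1) (hvw : det2 u v = det2 u w) :
    ∃ k : ℤ, ⟪u, v⟫ - ⟪u, w⟫ = k * ‖u‖ ^ 2 := by
  obtain ⟨⟨a, ha⟩, ⟨b, hb⟩⟩ := hu
  obtain ⟨⟨x, hx⟩, ⟨y, hy⟩⟩ := hv
  obtain ⟨⟨x', hx'⟩, ⟨y', hy'⟩⟩ := hw
  simp only [det2, ha, hb, hx, hy, hx', hy'] at hdet hvw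
  have hunit : IsUnit (a * y - b * x) := Int.isUnit_iff.mpr (by
    rcases hdet with h | h
    · exact .inr (by exact_mod_cast h)
    · exact .inl (by exact_mod_cast h))
  obtain ⟨k, hk⟩ := sq_add_sq_dvd_sub_of_det_eq hunit (by exact_mod_cast hvw)
  refine ⟨k, ?_⟩
  rw [E2.inner_eq, E2.inner_eq, E2.norm_sq_eq, ha, hb, hx, hy, hx', hy']
  have hkR := congrArg (Int.cast : ℤ → ℝ) hk
  push_cast at hkR
  linarith

end IsIntVec

/-- for `u ∈ ℤ² ∖ {0}`, `s ≥ 0` and `ε ∈ {-1,1}`, the set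
`{v ∈ ℤ² : ‖u‖ < ‖v‖, 0 ≤ ⟨u,v⟩ < s, det(u,v) = ε}` is finite with at most
`s / ‖u‖²` elements. -/
theorem stmt4 (u : E2) (hu : IsIntVec u) (hu0 : u ≠ 0) (s : ℝ) (hs : 0 ≤ s)
    (ε : ℝ) (hε : ε = -1 ∨ ε = 1) :
    {v : E2 | IsIntVec v ∧ ‖u‖ < ‖v‖ ∧ 0 ≤ ⟪u, v⟫ ∧ ⟪u, v⟫ < s ∧ det2 u v = ε}.Finite ∧
    ({v : E2 | IsIntVec v ∧ ‖u‖ < ‖v‖ ∧ 0 ≤ ⟪u, v⟫ ∧ ⟪u, v⟫ < s ∧ det2 u v = ε}.ncard : ℝ)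
      ≤ s / ‖u‖ ^ 2 := by
  set S := {v : E2 | IsIntVec v ∧ ‖u‖ < ‖v‖ ∧ 0 ≤ ⟪u, v⟫ ∧ ⟪u, v⟫ < s ∧ det2 u v = ε}
  have hinj : Set.InjOn (fun v => ⟪u, v⟫) S :=
    (injOn_inner_of_det2_eq hu0 ε).mono fun v hv => hv.2.2.2.2
  have hT : (fun v => ⟪u, v⟫) '' S ⊆ Set.Ico (‖u‖ ^ 2) s := by
    rintro _ ⟨v, ⟨hv, hnorm, hinner, hlt, hdet⟩, rfl⟩
    exact ⟨hu.norm_sq_le_inner hv (hdet ▸ hε) hnorm hinner, hlt⟩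
  have hdiff : ∀ t ∈ (fun v => ⟪u, v⟫) '' S, ∀ t' ∈ (fun v => ⟪u, v⟫) '' S,
      ∃ k : ℤ, t - t' = k * ‖u‖ ^ 2 := by
    rintro _ ⟨v, ⟨hv, -, -, -, hdet⟩, rfl⟩ _ ⟨w, ⟨hw, -, -, -, hdet'⟩, rfl⟩
    exact hu.exists_inner_sub_inner_eq_intCast_mul hv hw (hdet ▸ hε) (hdet.trans hdet'.symm)
  obtain ⟨hfin, hcard⟩ :=
    finite_and_ncard_le_div_of_sub_eq_intCast_mul (by positivity) hs hT hdiff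
  exact ⟨hfin.of_finite_image hinj, hinj.ncard_image ▸ hcard⟩
end
end

section
/- Let F, F₁, …, F_r be asymmetric norms on ℝ² that are C¹ on ℝ² ∖ {0}, let u ∈ ℝ² ∖ {0}, and let θ ∈ ℝ be such that e_θ and u are positively collinear. Then the following are equivalent: (a) there exist α₁, …, α_r ≥ 0 such that ∇F(u) = Σ_{i=1}^r α_i ∇F_i(u); (b) min{φ_{F₁}(θ), …, φ_{F_r}(θ)} ≤ φ_F(θ) ≤ max{φ_{F₁}(θ), …, φ_{F_r}(θ)}. -/
/-!
Euler's identity `⟪x, ∇G x⟫ = G x` and the 0-homogeneity of `∇G` reduce the claim to the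
coordinates `(A, B) = (G e_θ, det(e_θ, ∇G e_θ))` of the gradients in the frame `(e_θ, e_θ^⊥)`,
where `A > 0` and `φ_G(θ) = arctan (B / A)`. A vector `(a, b)` with `a > 0` is a non-negative
combination of vectors `(Aᵢ, Bᵢ)` with `Aᵢ > 0` exactly when its slope `b / a` is a convex
combination of the slopes `Bᵢ / Aᵢ`, i.e. lies between their minimum and maximum.
-/

open scoped RealInnerProductSpace
open MeasureTheory Real

noncomputable section

section Homogeneous

variable {H : Type*} [NormedAddCommGroup H] [InnerProductSpace ℝ H] [CompleteSpace H] {F : H → ℝ}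

theorem gradient_smul_of_pos (hF : ∀ c : ℝ, 0 < c → ∀ x, F (c • x) = c * F x)
    {c : ℝ} (hc : 0 < c) (x : H) : gradient F (c • x) = gradient F x := by
  have hfun : (F <| c • ·) = c • F := funext fun y => hF c hc y
  have h := fderiv_comp_smul (𝕜 := ℝ) (f := F) (x := x) c
  rw [hfun, fderiv_const_smul_field] at h
  simp only [gradient, smul_right_injective _ hc.ne' h]

theorem inner_gradient_self (hF : ∀ c : ℝ, 0 < c → ∀ x, F (c • x) = c * F x)
    {x : H} (hx : DifferentiableAt ℝ F x) : ⟪gradient F x, x⟫ = F x := by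
  have hline : HasDerivAt (fun c : ℝ => F (c • x)) (fderiv ℝ F x x) 1 := by
    have h := (hasDerivAt_id (1 : ℝ)).smul_const x
    simp only [id, one_smul] at h
    exact hx.hasFDerivAt.comp_hasDerivAt_of_eq 1 h (one_smul ℝ x).symm
  have hscale : (fun c : ℝ => F (c • x)) =ᶠ[nhds 1] fun c => c * F x :=
    (eventually_gt_nhds one_pos).mono fun c hc => hF c hc x
  rw [gradient, InnerProductSpace.toDual_symm_apply,
    (hline.congr_of_eventuallyEq hscale.symm).unique (hasDerivAt_mul_const (F x))]

end Homogeneous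

section Slopes

variable {ι : Type*} [Fintype ι] {A B : ι → ℝ} {a b : ℝ}

theorem exists_div_le_of_eq_sum_mul (ha : 0 < a) (hA : ∀ i, 0 < A i) {α : ι → ℝ}
    (hα : ∀ i, 0 ≤ α i) (hsumA : a = ∑ i, α i * A i) (hsumB : b = ∑ i, α i * B i) :
    ∃ i, B i / A i ≤ b / a := by
  by_contra! h
  have hpos : ∀ i, 0 < B i * a - b * A i := fun i => by
    linarith [(div_lt_div_iff₀ ha (hA i)).1 (h i)]
  have hzero : ∑ i, α i * (B i * a - b * A i) = 0 := by
    calc ∑ i, α i * (B i * a - b * A i) = (∑ i, α i * B i) * a - b * ∑ i, α i * A i := by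
          rw [Finset.sum_mul, Finset.mul_sum, ← Finset.sum_sub_distrib]
          exact Finset.sum_congr rfl fun i _ => by ring
      _ = 0 := by rw [← hsumA, ← hsumB]; ring
  have hα0 : ∀ i, α i = 0 := fun i =>
    (mul_eq_zero.1 ((Finset.sum_eq_zero_iff_of_nonneg fun i _ =>
      mul_nonneg (hα i) (hpos i).le).1 hzero i (Finset.mem_univ i))).resolve_right (hpos i).ne'
  simp only [hα0, zero_mul, Finset.sum_const_zero] at hsumA
  exact ha.ne' hsumA

theorem exists_eq_sum_mul_of_div_le_of_le_div (ha : 0 < a) (hA : ∀ i, 0 < A i) {j k : ι}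
    (hj : B j / A j ≤ b / a) (hk : b / a ≤ B k / A k) :
    ∃ α : ι → ℝ, (∀ i, 0 ≤ α i) ∧ a = ∑ i, α i * A i ∧ b = ∑ i, α i * B i := by
  classical
  obtain ⟨μ, ν, hμ, hν, hμν, hmix⟩ := Icc_subset_segment (𝕜 := ℝ) ⟨hj, hk⟩
  have hsum : ∀ X : ι → ℝ,
      ∑ i, (Pi.single j (μ * a / A j) + Pi.single k (ν * a / A k) : ι → ℝ) i * X i
        = μ * a / A j * X j + ν * a / A k * X k := fun X => by
    simp [add_mul, Finset.sum_add_distrib, Pi.single_apply]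
  refine ⟨Pi.single j (μ * a / A j) + Pi.single k (ν * a / A k), fun i => ?_, ?_, ?_⟩
  · have hAj := hA j
    have hAk := hA k
    have hμ' : (0 : ι → ℝ) ≤ Pi.single j (μ * a / A j) := Pi.single_nonneg.2 (by positivity)
    have hν' : (0 : ι → ℝ) ≤ Pi.single k (ν * a / A k) := Pi.single_nonneg.2 (by positivity)
    exact add_nonneg (hμ' i) (hν' i)
  · rw [hsum, div_mul_cancel₀ _ (hA j).ne', div_mul_cancel₀ _ (hA k).ne', ← add_mul, hμν, one_mul]
  · rw [hsum]
    simp only [smul_eq_mul] at hmix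
    field_simp at hmix
    linear_combination -hmix

theorem exists_eq_sum_mul_iff (ha : 0 < a) (hA : ∀ i, 0 < A i) :
    (∃ α : ι → ℝ, (∀ i, 0 ≤ α i) ∧ a = ∑ i, α i * A i ∧ b = ∑ i, α i * B i) ↔
      (∃ i, B i / A i ≤ b / a) ∧ ∃ i, b / a ≤ B i / A i := by
  constructor
  · rintro ⟨α, hα, hsumA, hsumB⟩
    refine ⟨exists_div_le_of_eq_sum_mul ha hA hα hsumA hsumB, ?_⟩
    have hsumB' : -b = ∑ i, α i * -B i := by simp [hsumB]
    obtain ⟨i, hi⟩ := exists_div_le_of_eq_sum_mul ha hA hα hsumA hsumB'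
    exact ⟨i, by simpa [neg_div] using hi⟩
  · rintro ⟨⟨j, hj⟩, ⟨k, hk⟩⟩
    exact exists_eq_sum_mul_of_div_le_of_le_div ha hA hj hk

end Slopes

theorem det2_eq_inner_perp (u v : E2) : det2 u v = ⟪perp u, v⟫ := by
  simp only [det2, perp, mk2, PiLp.inner_apply, RCLike.inner_apply, conj_trivial,
    Fin.sum_univ_two, Matrix.cons_val_zero, Matrix.cons_val_one, Matrix.cons_val_fin_one]
  ring

theorem det2_sum_smul {ι : Type*} (s : Finset ι) (u : E2) (α : ι → ℝ) (g : ι → E2) :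
    det2 u (∑ i ∈ s, α i • g i) = ∑ i ∈ s, α i * det2 u (g i) := by
  simp only [det2_eq_inner_perp, inner_sum, real_inner_smul_right]

theorem eq_iff_inner_eq_and_det2_eq {u : E2} (hu : u ≠ 0) {v w : E2} :
    v = w ↔ ⟪u, v⟫ = ⟪u, w⟫ ∧ det2 u v = det2 u w := by
  refine ⟨by rintro rfl; simp, fun ⟨hinner, hdet⟩ => ?_⟩
  have hnorm : ⟪u, u⟫ ≠ 0 := inner_self_ne_zero.2 hu
  simp only [PiLp.inner_apply, Fin.sum_univ_two, RCLike.inner_apply, conj_trivial, det2]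
    at hinner hdet hnorm
  ext i
  fin_cases i <;> simp only [Fin.zero_eta, Fin.mk_one] <;> apply mul_right_cancel₀ hnorm
  · linear_combination u 0 * hinner - u 1 * hdet
  · linear_combination u 1 * hinner + u 0 * hdet

theorem eTheta_ne_zero (θ : ℝ) : eTheta θ ≠ 0 := by
  intro h
  have h0 := congrArg (fun v : E2 => v 0) h
  have h1 := congrArg (fun v : E2 => v 1) h
  simp only [eTheta, mk2, Matrix.cons_val_zero, PiLp.zero_apply, Matrix.cons_val_one,
    Matrix.cons_val_fin_one] at h0 h1
  simpa [h0, h1] using sin_sq_add_cos_sq θ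

namespace IsAsymNorm

variable {F : E2 → ℝ}

theorem gradient_smul (hF : IsAsymNorm F) {c : ℝ} (hc : 0 < c) (x : E2) :
    gradient F (c • x) = gradient F x :=
  gradient_smul_of_pos (fun c hc => hF.2.1 c hc.le) hc x

theorem inner_gradient (hF : IsAsymNorm F) (hFC1 : ContDiffOn ℝ 1 F {(0 : E2)}ᶜ) {x : E2}
    (hx : x ≠ 0) : ⟪x, gradient F x⟫ = F x := by
  have hdiff : DifferentiableAt ℝ F x :=
    (hFC1.contDiffAt (isOpen_compl_singleton.mem_nhds hx)).differentiableAt one_ne_zero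
  rw [real_inner_comm, inner_gradient_self (fun c hc => hF.2.1 c hc.le) hdiff]

end IsAsymNorm

theorem stmt14_general (r : ℕ) (F : E2 → ℝ) (Fs : Fin r → E2 → ℝ)
    (hF : IsAsymNorm F) (hFC1 : ContDiffOn ℝ 1 F {(0 : E2)}ᶜ)
    (hFs : ∀ i, IsAsymNorm (Fs i)) (hFsC1 : ∀ i, ContDiffOn ℝ 1 (Fs i) {(0 : E2)}ᶜ)
    (u : E2) (θ : ℝ) (hθ : ∃ c : ℝ, 0 < c ∧ u = c • eTheta θ) :
    (∃ α : Fin r → ℝ, (∀ i, 0 ≤ α i) ∧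
        gradient F u = ∑ i, α i • gradient (Fs i) u) ↔
    ((∃ i, phiF (Fs i) θ ≤ phiF F θ) ∧ (∃ i, phiF F θ ≤ phiF (Fs i) θ)) := by
  obtain ⟨c, hc, rfl⟩ := hθ
  have he := eTheta_ne_zero θ
  simp only [hF.gradient_smul hc, fun i => (hFs i).gradient_smul hc,
    eq_iff_inner_eq_and_det2_eq he, inner_sum, real_inner_smul_right, det2_sum_smul,
    hF.inner_gradient hFC1 he, fun i => (hFs i).inner_gradient (hFsC1 i) he,
    phiF, arctan_le_arctan_iff]
  exact exists_eq_sum_mul_iff (hF.2.2.2 _ he) fun i => (hFs i).2.2.2 _ he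

/-- for asymmetric norms `F, F₁, …, F_r ∈ C¹(ℝ² ∖ {0})`, `u ≠ 0`
positively collinear to `e_θ`, the gradient `∇F(u)` is a non-negative combination of
the `∇F_i(u)` iff `min_i φ_{F_i}(θ) ≤ φ_F(θ) ≤ max_i φ_{F_i}(θ)`. -/
theorem stmt14 (r : ℕ) (hr : 0 < r) (F : E2 → ℝ) (Fs : Fin r → E2 → ℝ)
    (hF : IsAsymNorm F) (hFC1 : ContDiffOn ℝ 1 F {(0 : E2)}ᶜ)
    (hFs : ∀ i, IsAsymNorm (Fs i)) (hFsC1 : ∀ i, ContDiffOn ℝ 1 (Fs i) {(0 : E2)}ᶜ)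
    (u : E2) (hu : u ≠ 0) (θ : ℝ) (hθ : ∃ c : ℝ, 0 < c ∧ u = c • eTheta θ) :
    (∃ α : Fin r → ℝ, (∀ i, 0 ≤ α i) ∧
        gradient F u = ∑ i, α i • gradient (Fs i) u) ↔
    ((∃ i, phiF (Fs i) θ ≤ phiF F θ) ∧ (∃ i, phiF F θ ≤ phiF (Fs i) θ)) :=
  stmt14_general r F Fs hF hFC1 hFs hFsC1 u θ hθ
end
end
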